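/- Let G be a 2-connected graph with colouring f : V(G) → {1, 0, 0̂}, and let G′ = (G − f⁻¹(1)) − E(G[f⁻¹(0)]) be obtained by deleting all vertices of colour 1 and all edges between vertices of colour 0. Then for any f-respecting simultaneous dominating set S of G, the set S \ f⁻¹(1) is a vertex cover of G′. Conversely, for any vertex cover C of G′, the set C ∪ f⁻¹(1) is an f-respecting simultaneous dominating set of G. -/

import Mathlib

open SimpleGraph

variable {V : Type*}

/-- Number of connected components of a graph. -/
noncomputable def numComponents (G : SimpleGraph V) : ℕ := Nat.card G.ConnectedComponent

/-- A vertex is a cut vertex if its removal increases the number of connected components. -/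
def IsCutVertex (G : SimpleGraph V) (v : V) : Prop :=
  numComponents G < numComponents (G.induce {u | u ≠ v})

/-- `T` is a spanning tree of `G`: a subgraph on all vertices of `G` that is a tree. -/
def IsSpanningTree (G T : SimpleGraph V) : Prop := T ≤ G ∧ T.IsTree

/-- `v` is dominated by `S` in the graph `T`. -/
def DominatedIn (T : SimpleGraph V) (S : Set V) (v : V) : Prop :=
  v ∈ S ∨ ∃ u ∈ S, T.Adj v u

/-- `v` is simultaneously dominated by `S`: dominated in every spanning tree of `G`. -/
def SimDominated (G : SimpleGraph V) (S : Set V) (v : V) : Prop :=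
  ∀ T : SimpleGraph V, IsSpanningTree G T → DominatedIn T S v

/-- `S` is a simultaneous dominating set of `G`. -/
def IsSDSet (G : SimpleGraph V) (S : Set V) : Prop := ∀ v, SimDominated G S v

/-- `C` is a vertex cover of `G`. -/
def IsVertexCover (G : SimpleGraph V) (C : Set V) : Prop :=
  ∀ ⦃u v : V⦄, G.Adj u v → u ∈ C ∨ v ∈ C

/-- A block of `G`: a maximal vertex set inducing a connected subgraph without cut vertices. -/
def IsBlock (G : SimpleGraph V) (B : Set V) : Prop :=
  B.Nonempty ∧ (G.induce B).Connected ∧ (∀ x, ¬ IsCutVertex (G.induce B) x) ∧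
    ∀ B' : Set V, B ⊆ B' → (G.induce B').Connected →
      (∀ x, ¬ IsCutVertex (G.induce B') x) → B' = B

/-- 2-connected: connected, at least 3 vertices, no cut vertex. -/
def TwoConnected (G : SimpleGraph V) [Fintype V] : Prop :=
  G.Connected ∧ 3 ≤ Fintype.card V ∧ ∀ v, ¬ IsCutVertex G v

/-- Colours 1, 0, 0̂. -/
inductive Col : Type
  | one | zero | zhat
deriving DecidableEq

/-- `S` is an `f`-respecting simultaneous dominating set of `G`. -/
def RespSDS (G : SimpleGraph V) (f : V → Col) (S : Set V) : Prop :=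
  (∀ v, f v = Col.one → v ∈ S) ∧ ∀ v, f v = Col.zhat → SimDominated G S v

/-- A minimum `f`-respecting simultaneous dominating set. -/
def MinRespSDS (G : SimpleGraph V) (f : V → Col) (S : Set V) : Prop :=
  RespSDS G f S ∧ ∀ S' : Set V, RespSDS G f S' → S.ncard ≤ S'.ncard

/-- The graph `(G − f⁻¹(1)) − E(G[f⁻¹(0)])`: delete all vertices of colour 1 (keeping them as
isolated vertices) and all edges between two vertices of colour 0. -/
def Gminus (G : SimpleGraph V) (f : V → Col) : SimpleGraph V where
  Adj u w := G.Adj u w ∧ f u ≠ Col.one ∧ f w ≠ Col.one ∧ ¬(f u = Col.zero ∧ f w = Col.zero)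
  symm := ⟨fun u w ⟨h, h1, h2, h3⟩ => ⟨h.symm, h2, h1, fun ⟨a, b⟩ => h3 ⟨b, a⟩⟩⟩
  loopless := ⟨fun u h => G.loopless.irrefl u h.1⟩

/-
In a 2-connected graph `G - u` is connected, so for every edge `uv` a spanning tree of `G - u`
plus the edge `uv` is a spanning tree of `G` in which `v` is the only neighbour of `u`. Hence `u` is
dominated by `S` in every spanning tree iff `u ∈ S` or all `G`-neighbours of `u` are in `S`; the
converse holds because in a tree on at least two vertices every vertex has a neighbour. Every edge
of `G′` has an endpoint of colour `0̂`, so on the vertices of colour `0̂` this condition is exactly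
the vertex cover condition for `G′`.
-/

namespace SimpleGraph

variable {G : SimpleGraph V}

lemma Connected.numComponents_eq_one (hG : G.Connected) : numComponents G = 1 :=
  have := hG.nonempty
  have := hG.preconnected.subsingleton_connectedComponent
  Nat.card_unique

lemma preconnected_of_numComponents_le_one [Finite V] (h : numComponents G ≤ 1) :
    G.Preconnected := by
  have := (Finite.card_le_one_iff_subsingleton).mp h
  exact fun a b => ConnectedComponent.eq.mp (Subsingleton.elim _ _)

lemma exists_isSpanningTree_forall_adj_eq {u v : V} (hu : (G.induce {x | x ≠ u}).Preconnected)
    (huv : G.Adj u v) : ∃ T, IsSpanningTree G T ∧ ∀ w, T.Adj u w → w = v := by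
  set G₁ := G.deleteIncidenceSet u ⊔ edge u v
  have hG₁ : G₁ ≤ G := sup_le (G.deleteIncidenceSet_le u) ((edge_le_iff G).mpr (Or.inr huv))
  let φ : G.induce {x | x ≠ u} →g G₁ :=
    ⟨Subtype.val, fun {x y} h => Or.inl (deleteIncidenceSet_adj.mpr ⟨h, x.2, y.2⟩)⟩
  have hreach : ∀ x, G₁.Reachable v x := by
    intro x
    by_cases hx : x = u
    · subst hx
      exact Adj.reachable (Or.inr ((edge_adj _ _ _ _).mpr ⟨Or.inr ⟨rfl, rfl⟩, huv.ne'⟩))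
    · exact (hu ⟨v, huv.ne'⟩ ⟨x, hx⟩).map φ
  have hG₁conn : G₁.Connected := (connected_iff_exists_forall_reachable G₁).mpr ⟨v, hreach⟩
  obtain ⟨T, hTG₁, hT⟩ := hG₁conn.exists_isTree_le
  refine ⟨T, ⟨hTG₁.trans hG₁, hT⟩, fun w hw => ?_⟩
  rcases hTG₁ hw with h | h
  · exact absurd rfl (deleteIncidenceSet_adj.mp h).2.1
  · rw [edge_adj] at h
    grind

end SimpleGraph

open SimpleGraph

variable {G : SimpleGraph V}

lemma TwoConnected.preconnected_induce_ne [Fintype V] (hG : TwoConnected G) (u : V) :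
    (G.induce {x | x ≠ u}).Preconnected := by
  have h := hG.2.2 u
  rw [IsCutVertex, hG.1.numComponents_eq_one, not_lt] at h
  exact preconnected_of_numComponents_le_one h

lemma SimDominated.mem_of_adj {S : Set V} {u v : V} (hu : (G.induce {x | x ≠ u}).Preconnected)
    (hd : SimDominated G S u) (huS : u ∉ S) (huv : G.Adj u v) : v ∈ S := by
  obtain ⟨T, hT, hleaf⟩ := exists_isSpanningTree_forall_adj_eq hu huv
  rcases hd T hT with h | ⟨w, hw, hadj⟩
  · exact absurd h huS
  · exact hleaf w hadj ▸ hw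

lemma simDominated_of_forall_adj [Nontrivial V] {S : Set V} {v : V}
    (h : ∀ w, G.Adj v w → w ∈ S) : SimDominated G S v := fun _ hT =>
  have ⟨w, hw⟩ := hT.2.1.preconnected.exists_adj_of_nontrivial v
  Or.inr ⟨w, h w (hT.1 hw), hw⟩

lemma TwoConnected.simDominated_iff [Fintype V] (hG : TwoConnected G) {S : Set V} {v : V} :
    SimDominated G S v ↔ v ∈ S ∨ ∀ w, G.Adj v w → w ∈ S := by
  have : Nontrivial V := Fintype.one_lt_card_iff_nontrivial.mp (by linarith [hG.2.1])
  refine ⟨fun hd => or_iff_not_imp_left.mpr fun hv w =>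
    hd.mem_of_adj (hG.preconnected_induce_ne v) hv, ?_⟩
  rintro (hv | hv)
  · exact fun _ _ => Or.inl hv
  · exact simDominated_of_forall_adj hv

lemma Gminus_adj_zhat {f : V → Col} {a b : V} (h : (Gminus G f).Adj a b) :
    f a = Col.zhat ∨ f b = Col.zhat := by
  obtain ⟨-, ha, hb, hab⟩ := h
  cases h₁ : f a <;> cases h₂ : f b <;> simp_all

/-- In a 2-connected graph, for any `f`-respecting SD-set `S`, the set
`S \ f⁻¹(1)` is a vertex cover of `G′ = (G − f⁻¹(1)) − E(G[f⁻¹(0)])`; conversely, for any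
vertex cover `C` of `G′`, the set `C ∪ f⁻¹(1)` is an `f`-respecting SD-set of `G`. -/
theorem stmt11 [Fintype V] (G : SimpleGraph V) (hG : TwoConnected G) (f : V → Col) :
    (∀ S : Set V, RespSDS G f S → _root_.IsVertexCover (Gminus G f) (S \ f ⁻¹' {Col.one})) ∧
    (∀ C : Set V, _root_.IsVertexCover (Gminus G f) C → RespSDS G f (C ∪ f ⁻¹' {Col.one})) := by
  constructor
  · rintro S ⟨-, hS⟩
    have key : ∀ a b, (Gminus G f).Adj a b → f a = Col.zhat →
        a ∈ S \ f ⁻¹' {Col.one} ∨ b ∈ S \ f ⁻¹' {Col.one} := fun a b hab ha =>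
      ((hG.simDominated_iff.mp (hS a ha)).imp (⟨·, hab.2.1⟩)
        fun h => ⟨h b hab.1, hab.2.2.1⟩)
    intro a b hab
    rcases Gminus_adj_zhat hab with ha | hb
    · exact key a b hab ha
    · exact (key b a hab.symm hb).symm
  · refine fun C hC => ⟨fun v hv => Or.inr hv, fun v hv => hG.simDominated_iff.mpr ?_⟩
    refine or_iff_not_imp_left.mpr fun hvC w hvw => ?_
    by_cases hw : f w = Col.one
    · exact Or.inr hw
    · have hvw' : (Gminus G f).Adj v w := ⟨hvw, by simp [hv], hw, by simp [hv]⟩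
      exact Or.inl ((hC hvw').resolve_left fun h => hvC (Or.inl h))
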